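/- arXiv:1906.04782 — 2 statements merged into one kernel-verified Lean document; each statement's English description precedes it below -/
import Mathlib

section
/- Let ν ∈ (0,1), let ι be a finite index set with |ι| ≥ 2, fix a horizon L ≥ 1, and let V_k : (ι → ℝ) → ℝ for k = 0,…,L be defined by the backward Bellman recursion: V_L(m) = max_{x∈ι} exp(m[x])/Σ_{l∈ι} exp(m[l]) and, for 0 ≤ k < L, V_k(m) = max_{a∈ι} q_k(m,a) with q_k(m,a) = ∫₀^∞ V_{k+1}( m + J(y)·δ_a ) · f(y|m,a) dy (assume all these integrals exist). Then for every 0 ≤ k ≤ L−1, every m : ι → ℝ, and every a ∈ ι: q_k(m,a) ≤ (1 + h(ν))^{L−k−1} · ξ(a;m) / Σ_{l∈ι} exp(m[l]). -/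
open Real MeasureTheory Finset

set_option linter.unusedSectionVars false

noncomputable section

variable {ι : Type*} [Fintype ι] [DecidableEq ι]

/-- The log-likelihood update function `J(y) = (1-ν)y + ln ν`. -/
def Jfun (ν y : ℝ) : ℝ := (1 - ν) * y + Real.log ν

/-- `h(ν) = exp(ν ln ν/(1-ν)) - exp(ln ν/(1-ν))`. -/
def hfun (ν : ℝ) : ℝ :=
  Real.exp (ν * Real.log ν / (1 - ν)) - Real.exp (Real.log ν / (1 - ν))

/-- `g(ν) = exp(ln ν/(1-ν)) (1/(ν+1) - ln ν/(1-ν))`. -/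
def gfun (ν : ℝ) : ℝ :=
  Real.exp (Real.log ν / (1 - ν)) * (1 / (ν + 1) - Real.log ν / (1 - ν))

/-- Kronecker delta `δ[a,x]` as a real number. -/
def kdelta (a x : ι) : ℝ := if x = a then 1 else 0

theorem univ_nonempty_of_card (hcard : 2 ≤ Fintype.card ι) :
    (Finset.univ : Finset ι).Nonempty := by
  rw [← Finset.card_pos]
  have : (Finset.univ : Finset ι).card = Fintype.card ι := rfl
  omega

theorem erase_nonempty_of_card (hcard : 2 ≤ Fintype.card ι) (a : ι) :
    ((Finset.univ : Finset ι).erase a).Nonempty := by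
  rw [← Finset.card_pos, Finset.card_erase_of_mem (Finset.mem_univ a)]
  have : (Finset.univ : Finset ι).card = Fintype.card ι := rfl
  omega

theorem pairs_nonempty_of_card (hcard : 2 ≤ Fintype.card ι) :
    ((Finset.univ : Finset (ι × ι)).filter fun p => p.1 ≠ p.2).Nonempty := by
  obtain ⟨a, b, hab⟩ := Fintype.exists_pair_of_one_lt_card (α := ι) (by omega)
  exact ⟨(a, b), by simp [hab]⟩

/-- `max_{â ≠ a} m[â]`. -/
def maxOther (hcard : 2 ≤ Fintype.card ι) (m : ι → ℝ) (a : ι) : ℝ :=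
  ((Finset.univ : Finset ι).erase a).sup' (erase_nonempty_of_card hcard a) m

/-- `ξ(a; m)`. -/
def xi (ν : ℝ) (hcard : 2 ≤ Fintype.card ι) (m : ι → ℝ) (a : ι) : ℝ :=
  if maxOther hcard m a - m a < Real.log ν then Real.exp (m a)
  else Real.exp (maxOther hcard m a)
    + hfun ν * Real.exp ((m a - ν * maxOther hcard m a) / (1 - ν))

/-- `min_{x_i ≠ x_j} (m[x_i] - ν m[x_j])`, over ordered pairs of distinct indices. -/
def minPair (ν : ℝ) (hcard : 2 ≤ Fintype.card ι) (m : ι → ℝ) : ℝ :=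
  (((Finset.univ : Finset (ι × ι)).filter fun p => p.1 ≠ p.2).inf'
    (pairs_nonempty_of_card hcard)) (fun p => m p.1 - ν * m p.2)

/-- The feedback density `f(y | m, a) = b[a] ν e^{-νy} + (1-b[a]) e^{-y}`. -/
def fdens (ν : ℝ) (m : ι → ℝ) (a : ι) (y : ℝ) : ℝ :=
  (Real.exp (m a) / ∑ l, Real.exp (m l)) * (ν * Real.exp (-ν * y))
    + (1 - Real.exp (m a) / ∑ l, Real.exp (m l)) * Real.exp (-y)

/-- Terminal value `V_L(m) = max_x exp(m[x]) / ∑_l exp(m[l])`. -/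
def Vterm (hcard : 2 ≤ Fintype.card ι) (m : ι → ℝ) : ℝ :=
  ((Finset.univ : Finset ι).sup' (univ_nonempty_of_card hcard) fun x => Real.exp (m x))
    / ∑ l, Real.exp (m l)

/-!
Write `S(m) = ∑ₗ e^{m[l]}` and `m' = m + J(y) δ_a`. By Bayes' rule `f(y|m,a) = S(m') e^{-y} / S(m)`,
so a bound `V_{k+1} ≤ C · V_L` bounds `q_k(m,a)` by `C / S(m)` times
`∫₀^∞ max(e^M, e^{m[a] + J(y)}) e^{-y} dy` with `M = max_{â ≠ a} m[â]`, and this integral is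
exactly `ξ(a;m)`: the maximum switches branches at a single point. Convexity of
`u ↦ e^{-u} + h(ν) e^{νu/(1-ν)}` on `[0, -ln ν]` gives `ξ(a;m) ≤ (1 + h(ν)) max_x e^{m[x]}`, so
taking the maximum over `a` yields `V_k ≤ C (1 + h(ν)) V_L`, and backward induction from `V_L`
produces the factor `(1 + h(ν))^{L-k-1}`.
-/

/-- `ξ(a; m)` as a function of `c = m[a]` and `M = max_{â ≠ a} m[â]`. -/
def xiOfMax (ν c M : ℝ) : ℝ :=
  if M - c < Real.log ν then Real.exp c
  else Real.exp M + hfun ν * Real.exp ((c - ν * M) / (1 - ν))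

section Scalar

variable {ν : ℝ}

lemma hfun_pos (hν : ν ∈ Set.Ioo (0:ℝ) 1) : 0 < hfun ν := by
  obtain ⟨h0, h1⟩ := hν
  have : Real.log ν / (1 - ν) < ν * Real.log ν / (1 - ν) :=
    div_lt_div_of_pos_right (by nlinarith [Real.log_neg h0 h1]) (by linarith)
  simpa [hfun, sub_pos] using Real.exp_lt_exp.2 this

lemma hfun_mul_exp_neg_log (hν : ν ∈ Set.Ioo (0:ℝ) 1) :
    hfun ν * Real.exp (ν / (1 - ν) * -Real.log ν) = 1 - ν := by
  have h1ν : 1 - ν ≠ 0 := by linarith [hν.2]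
  rw [hfun, sub_mul, ← Real.exp_add, ← Real.exp_add,
    show ν * Real.log ν / (1 - ν) + ν / (1 - ν) * -Real.log ν = 0 by ring,
    show Real.log ν / (1 - ν) + ν / (1 - ν) * -Real.log ν = Real.log ν by field_simp; ring,
    Real.exp_zero, Real.exp_log hν.1]

/-- The function `u ↦ e^{-u} + h(ν) e^{νu/(1-ν)}` is convex, equals `1 + h(ν)` at `u = 0` and
`1` at `u = -ln ν`, so it stays below `1 + h(ν)` in between. -/
lemma exp_neg_add_hfun_mul_exp_le (hν : ν ∈ Set.Ioo (0:ℝ) 1) {u : ℝ} (hu₀ : 0 ≤ u)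
    (hu : u ≤ -Real.log ν) :
    Real.exp (-u) + hfun ν * Real.exp (ν / (1 - ν) * u) ≤ 1 + hfun ν := by
  have hconv : ConvexOn ℝ Set.univ
      fun u => Real.exp (-u) + hfun ν * Real.exp (ν / (1 - ν) * u) :=
    ((convexOn_exp.comp_linearMap (LinearMap.mul ℝ ℝ (-1))).add
      ((convexOn_exp.comp_linearMap (LinearMap.mul ℝ ℝ (ν / (1 - ν)))).smul
        (hfun_pos hν).le)).congr fun u _ => by simp
  have := hconv.le_max_of_mem_Icc (Set.mem_univ 0) (Set.mem_univ (-Real.log ν)) ⟨hu₀, hu⟩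
  simp only [neg_zero, mul_zero, Real.exp_zero, mul_one, neg_neg, Real.exp_log hν.1,
    hfun_mul_exp_neg_log hν] at this
  refine this.trans (max_le le_rfl ?_)
  linarith [hν.1, hfun_pos hν]

lemma xiOfMax_le (hν : ν ∈ Set.Ioo (0:ℝ) 1) (c M : ℝ) :
    xiOfMax ν c M ≤ (1 + hfun ν) * max (Real.exp M) (Real.exp c) := by
  have hh := hfun_pos hν
  have h1ν : 0 < 1 - ν := by linarith [hν.2]
  unfold xiOfMax
  split_ifs with hcase
  · exact (le_max_right _ _).trans (le_mul_of_one_le_left (by positivity) (by linarith))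
  rcases le_or_gt c M with hcM | hMc
  · have : Real.exp ((c - ν * M) / (1 - ν)) ≤ Real.exp M :=
      Real.exp_le_exp.2 ((div_le_iff₀ h1ν).2 (by nlinarith))
    nlinarith [le_max_left (Real.exp M) (Real.exp c)]
  · have hsplit : Real.exp M + hfun ν * Real.exp ((c - ν * M) / (1 - ν)) = Real.exp c *
        (Real.exp (-(c - M)) + hfun ν * Real.exp (ν / (1 - ν) * (c - M))) := by
      have e : c + ν / (1 - ν) * (c - M) = (c - ν * M) / (1 - ν) := by field_simp; ring
      rw [mul_add, mul_left_comm, ← Real.exp_add, ← Real.exp_add, e, neg_sub, add_sub_cancel]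
    rw [hsplit, max_eq_right (Real.exp_le_exp.2 hMc.le), mul_comm (1 + hfun ν)]
    exact mul_le_mul_of_nonneg_left
      (exp_neg_add_hfun_mul_exp_le hν (by linarith) (by linarith [not_lt.1 hcase]))
      (Real.exp_pos c).le

lemma exp_add_Jfun_mul_exp_neg (hν : 0 < ν) (c y : ℝ) :
    Real.exp (c + Jfun ν y) * Real.exp (-y) = ν * Real.exp c * Real.exp (-ν * y) := by
  rw [← Real.exp_add, Jfun, mul_comm ν, ← Real.exp_log hν, ← Real.exp_add, ← Real.exp_add,
    Real.exp_log hν]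
  ring_nf

lemma add_Jfun_le_iff (hν : ν < 1) {c M y : ℝ} :
    c + Jfun ν y ≤ M ↔ y ≤ (M - c - Real.log ν) / (1 - ν) := by
  rw [le_div_iff₀ (by linarith), Jfun]
  constructor <;> intro h <;> linarith

lemma integrableOn_max_exp_add_Jfun_mul_exp_neg (hν : ν ∈ Set.Ioo (0:ℝ) 1) (c M a : ℝ) :
    IntegrableOn (fun y => max (Real.exp M) (Real.exp (c + Jfun ν y)) * Real.exp (-y))
      (Set.Ioi a) := by
  simp_rw [max_mul_of_nonneg _ _ (Real.exp_pos _).le, exp_add_Jfun_mul_exp_neg hν.1]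
  exact ((integrableOn_exp_neg_Ioi a).const_mul _).sup
    ((integrableOn_exp_mul_Ioi (neg_lt_zero.2 hν.1) a).const_mul _)

lemma integral_max_exp_add_Jfun_mul_exp_neg (hν : ν ∈ Set.Ioo (0:ℝ) 1) (c M : ℝ) :
    ∫ y in Set.Ioi (0:ℝ), max (Real.exp M) (Real.exp (c + Jfun ν y)) * Real.exp (-y)
      = xiOfMax ν c M := by
  set g := fun y => max (Real.exp M) (Real.exp (c + Jfun ν y)) * Real.exp (-y)
  set T := (M - c - Real.log ν) / (1 - ν) with hT
  have hleft : ∀ y, y ≤ T → g y = Real.exp M * Real.exp (-y) := fun y hy => by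
    dsimp only [g]
    rw [max_eq_left (Real.exp_le_exp.2 ((add_Jfun_le_iff hν.2).2 hy))]
  have hright : ∀ y ∈ Set.Ioi T, g y = ν * Real.exp c * Real.exp (-ν * y) := fun y hy => by
    have : M ≤ c + Jfun ν y := (lt_of_not_ge (mt (add_Jfun_le_iff hν.2).1 (not_le.2 hy))).le
    dsimp only [g]
    rw [max_eq_right (Real.exp_le_exp.2 this), exp_add_Jfun_mul_exp_neg hν.1]
  have hν₀ : -ν < 0 := neg_lt_zero.2 hν.1
  have h1ν : 1 - ν ≠ 0 := by linarith [hν.2]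
  unfold xiOfMax
  split_ifs with hcase
  · have hT0 : T < 0 := div_neg_of_neg_of_pos (by linarith) (by linarith [hν.2])
    rw [setIntegral_congr_fun measurableSet_Ioi fun y hy => hright y (hT0.trans hy),
      integral_const_mul, integral_exp_mul_Ioi hν₀]
    field_simp [hν.1.ne']
    simp
  · have hT0 : 0 ≤ T := div_nonneg (by linarith) (by linarith [hν.2])
    have hg := integrableOn_max_exp_add_Jfun_mul_exp_neg hν c M
    rw [← intervalIntegral.integral_interval_add_Ioi (hg 0) (hg T),
      intervalIntegral.integral_congr fun y hy => hleft y (hy.2.trans_eq (max_eq_right hT0)),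
      setIntegral_congr_fun measurableSet_Ioi hright, intervalIntegral.integral_const_mul,
      integral_const_mul,
      ← intervalIntegral.integral_Ioi_sub_Ioi (integrableOn_exp_neg_Ioi 0) hT0,
      integral_exp_neg_Ioi, integral_exp_neg_Ioi, integral_exp_mul_Ioi hν₀]
    have e₁ : Real.exp M * Real.exp (-T)
        = Real.exp (Real.log ν / (1 - ν)) * Real.exp ((c - ν * M) / (1 - ν)) := by
      rw [← Real.exp_add, ← Real.exp_add, hT]
      congr 1
      field_simp
      ring
    have e₂ : ν * Real.exp c * (-Real.exp (-ν * T) / -ν)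
        = Real.exp (ν * Real.log ν / (1 - ν)) * Real.exp ((c - ν * M) / (1 - ν)) := by
      rw [neg_div_neg_eq, mul_div_assoc', mul_div_right_comm, mul_div_cancel_left₀ _ hν.1.ne',
        ← Real.exp_add, ← Real.exp_add, hT]
      congr 1
      field_simp
      ring
    rw [neg_zero, Real.exp_zero, mul_sub, mul_one, e₁, e₂, hfun]
    ring

end Scalar

section BeliefUpdate

variable {ν : ℝ}

omit [DecidableEq ι] in
lemma sum_exp_pos [Nonempty ι] (m : ι → ℝ) : 0 < ∑ l, Real.exp (m l) :=
  Finset.sum_pos (fun _ _ => Real.exp_pos _) Finset.univ_nonempty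

lemma maxOther_add_mul_kdelta (hcard : 2 ≤ Fintype.card ι) (m : ι → ℝ) (a : ι) (t : ℝ) :
    maxOther hcard (fun x => m x + t * kdelta a x) a = maxOther hcard m a :=
  Finset.sup'_congr _ rfl fun x hx => by simp [kdelta, Finset.ne_of_mem_erase hx]

lemma sup'_exp_eq_max_exp_maxOther (hcard : 2 ≤ Fintype.card ι) (m : ι → ℝ) (a : ι) :
    (Finset.univ.sup' (univ_nonempty_of_card hcard) fun x => Real.exp (m x))
      = max (Real.exp (maxOther hcard m a)) (Real.exp (m a)) := by
  rw [Finset.sup'_congr _ (Finset.insert_erase (Finset.mem_univ a)).symm fun _ _ => rfl,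
    Finset.sup'_insert, maxOther,
    Finset.apply_sup'_eq_sup'_comp _ Real.exp fun x y => Real.exp_monotone.map_sup x y]
  exact max_comm _ _

lemma sum_exp_add_mul_kdelta (m : ι → ℝ) (a : ι) (t : ℝ) :
    ∑ l, Real.exp (m l + t * kdelta a l)
      = ∑ l, Real.exp (m l) + (Real.exp t - 1) * Real.exp (m a) := by
  rw [← Finset.add_sum_erase _ _ (Finset.mem_univ a),
    ← Finset.add_sum_erase _ _ (Finset.mem_univ a),
    Finset.sum_congr rfl fun x hx => by rw [kdelta, if_neg (Finset.ne_of_mem_erase hx)]]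
  simp only [kdelta, if_true, mul_one, mul_zero, add_zero, Real.exp_add]
  ring

lemma fdens_mul_sum_exp (hν : 0 < ν) (m : ι → ℝ) (a : ι) (y : ℝ)
    (hS : ∑ l, Real.exp (m l) ≠ 0) :
    fdens ν m a y * ∑ l, Real.exp (m l)
      = (∑ l, Real.exp (m l + Jfun ν y * kdelta a l)) * Real.exp (-y) := by
  have hJ : Real.exp (Jfun ν y) * Real.exp (-y) = ν * Real.exp (-ν * y) := by
    simpa using exp_add_Jfun_mul_exp_neg hν 0 y
  rw [sum_exp_add_mul_kdelta, fdens]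
  field_simp
  simp only [neg_mul] at hJ ⊢
  linear_combination -Real.exp (m a) * hJ

end BeliefUpdate

section Bellman

variable {ν : ℝ}

lemma xi_eq_xiOfMax (hcard : 2 ≤ Fintype.card ι) (m : ι → ℝ) (a : ι) :
    xi ν hcard m a = xiOfMax ν (m a) (maxOther hcard m a) :=
  rfl

lemma fdens_nonneg [Nonempty ι] (hν : 0 < ν) (m : ι → ℝ) (a : ι) (y : ℝ) :
    0 ≤ fdens ν m a y := by
  have hS := sum_exp_pos m
  refine (mul_nonneg_iff_of_pos_right hS).1 ?_
  rw [fdens_mul_sum_exp hν m a y hS.ne']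
  positivity

lemma Vterm_update_mul_fdens (hcard : 2 ≤ Fintype.card ι) (hν : 0 < ν) (m : ι → ℝ) (a : ι)
    (y : ℝ) :
    Vterm hcard (fun x => m x + Jfun ν y * kdelta a x) * fdens ν m a y
      = max (Real.exp (maxOther hcard m a)) (Real.exp (m a + Jfun ν y)) * Real.exp (-y)
        / ∑ l, Real.exp (m l) := by
  have : Nonempty ι := Fintype.card_pos_iff.1 (by omega)
  have hS := (sum_exp_pos m).ne'
  have hS' := (sum_exp_pos fun x => m x + Jfun ν y * kdelta a x).ne'
  rw [eq_div_iff hS, mul_assoc, fdens_mul_sum_exp hν m a y hS, Vterm,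
    sup'_exp_eq_max_exp_maxOther hcard _ a, maxOther_add_mul_kdelta]
  field_simp
  simp [kdelta]

lemma setIntegral_le_mul_xi (hν : ν ∈ Set.Ioo (0:ℝ) 1) (hcard : 2 ≤ Fintype.card ι)
    {W : (ι → ℝ) → ℝ} {C : ℝ} (hW : ∀ m', W m' ≤ C * Vterm hcard m') (m : ι → ℝ) (a : ι)
    (hint : IntegrableOn (fun y => W (fun x => m x + Jfun ν y * kdelta a x) * fdens ν m a y)
      (Set.Ioi 0)) :
    ∫ y in Set.Ioi (0:ℝ), W (fun x => m x + Jfun ν y * kdelta a x) * fdens ν m a y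
      ≤ C * xi ν hcard m a / ∑ l, Real.exp (m l) := by
  have : Nonempty ι := Fintype.card_pos_iff.1 (by omega)
  have hmax := integrableOn_max_exp_add_Jfun_mul_exp_neg hν (m a) (maxOther hcard m a) 0
  calc ∫ y in Set.Ioi (0:ℝ), W (fun x => m x + Jfun ν y * kdelta a x) * fdens ν m a y
      ≤ ∫ y in Set.Ioi (0:ℝ), C * (Vterm hcard (fun x => m x + Jfun ν y * kdelta a x)
          * fdens ν m a y) := by
        refine setIntegral_mono_on hint ?_ measurableSet_Ioi fun y _ => ?_
        · simp_rw [Vterm_update_mul_fdens hcard hν.1]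
          exact (hmax.div_const _).const_mul C
        · rw [← mul_assoc]
          exact mul_le_mul_of_nonneg_right (hW _) (fdens_nonneg hν.1 m a y)
    _ = C * xi ν hcard m a / ∑ l, Real.exp (m l) := by
        simp_rw [Vterm_update_mul_fdens hcard hν.1]
        rw [integral_const_mul, integral_div, integral_max_exp_add_Jfun_mul_exp_neg hν,
          xi_eq_xiOfMax, mul_div_assoc]

lemma xi_div_sum_exp_le (hν : ν ∈ Set.Ioo (0:ℝ) 1) (hcard : 2 ≤ Fintype.card ι)
    (m : ι → ℝ) (a : ι) :
    xi ν hcard m a / ∑ l, Real.exp (m l) ≤ (1 + hfun ν) * Vterm hcard m := by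
  have : Nonempty ι := Fintype.card_pos_iff.1 (by omega)
  rw [Vterm, sup'_exp_eq_max_exp_maxOther hcard m a, mul_div_assoc', xi_eq_xiOfMax]
  exact div_le_div_of_nonneg_right (xiOfMax_le hν _ _) (sum_exp_pos m).le

end Bellman

/-- upper bound on the Q-function (Theorem 1 of the paper, upper bound). -/
theorem Qfun_upper_bound
    (ν : ℝ) (hν : ν ∈ Set.Ioo (0:ℝ) 1)
    (hcard : 2 ≤ Fintype.card ι)
    (L : ℕ) (hL : 1 ≤ L)
    (V : ℕ → (ι → ℝ) → ℝ) (q : ℕ → (ι → ℝ) → ι → ℝ)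
    (hVL : ∀ m : ι → ℝ, V L m = Vterm hcard m)
    (hq : ∀ k, k < L → ∀ (m : ι → ℝ) (a : ι),
      q k m a = ∫ y in Set.Ioi (0:ℝ),
        V (k + 1) (fun x => m x + Jfun ν y * kdelta a x) * fdens ν m a y)
    (hV : ∀ k, k < L → ∀ m : ι → ℝ,
      V k m = (Finset.univ : Finset ι).sup' (univ_nonempty_of_card hcard) (q k m))
    (hint : ∀ k, k < L → ∀ (m : ι → ℝ) (a : ι),
      MeasureTheory.IntegrableOn
        (fun y => V (k + 1) (fun x => m x + Jfun ν y * kdelta a x) * fdens ν m a y)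
        (Set.Ioi (0:ℝ))) :
    ∀ k, k ≤ L - 1 → ∀ (m : ι → ℝ) (a : ι),
      q k m a ≤ (1 + hfun ν) ^ (L - k - 1) * xi ν hcard m a / ∑ l, Real.exp (m l) := by
  have hstep : ∀ k < L, ∀ C : ℝ, (∀ m', V (k + 1) m' ≤ C * Vterm hcard m') →
      ∀ m a, q k m a ≤ C * xi ν hcard m a / ∑ l, Real.exp (m l) := fun k hk _ hC m a =>
    hq k hk m a ▸ setIntegral_le_mul_xi hν hcard hC m a (hint k hk m a)
  have hV_le : ∀ n < L, ∀ m, V (L - n) m ≤ (1 + hfun ν) ^ n * Vterm hcard m := by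
    intro n
    induction n with
    | zero => simp [hVL]
    | succ n ih =>
      intro hn m
      have hC : ∀ m', V (L - (n + 1) + 1) m' ≤ (1 + hfun ν) ^ n * Vterm hcard m' := by
        rw [show L - (n + 1) + 1 = L - n by omega]
        exact ih (by omega)
      rw [hV _ (by omega)]
      refine Finset.sup'_le _ _ fun a _ => (hstep _ (by omega) _ hC m a).trans ?_
      rw [mul_div_assoc, pow_succ, mul_assoc]
      gcongr
      · exact pow_nonneg (by linarith [hfun_pos hν]) n
      · exact xi_div_sum_exp_le hν hcard m a
  intro k hk
  refine hstep k (by omega) _ fun m' => ?_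
  simpa [show L - (L - k - 1) = k + 1 by omega] using hV_le (L - k - 1) (by omega) m'

end
end

section
/- Let ν ∈ (0,1), let ι be a finite index set with |ι| ≥ 2, and let m : ι → ℝ. Let x₁ be an index maximizing m over ι and x₂ an index maximizing m over ι \ {x₁}. Define, for a ∈ ι and 0 ≤ k ≤ L−1 (with L ≥ 1), q_k^{LB}(m,a) = ( ξ(a;m) + exp( ( min over ordered pairs of distinct indices (x_i,x_j) of ( m[x_i] − ν·m[x_j] ) ) / (1−ν) ) · h(ν) · Σ_{n=1}^{L−k−1} g(ν)^n ) / Σ_{l∈ι} exp(m[l]) and q_k^{UB}(m,a) = (1 + h(ν))^{L−k−1} · ξ(a;m) / Σ_{l∈ι} exp(m[l]). Then for every a ∈ ι, q_k^{LB}(m,a) ≤ q_k^{LB}(m,x₂) and q_k^{UB}(m,a) ≤ q_k^{UB}(m,x₂); that is, the second-best index x₂ maximizes both bounds over a. -/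
open Real MeasureTheory Finset

set_option linter.unusedSectionVars false

noncomputable section

variable {ι : Type*} [Fintype ι] [DecidableEq ι]

/-!
The bounds depend on `a` only through `ξ(a; m)`, so it suffices to show that `ξ(·; m)` is
maximal at `x₂`. For `a ≠ x₁` the competitor of `a` is `x₁`, and `ξ(a; m)` grows with `m[a]`.
For `a = x₁` the claim is a swap inequality
`exp u + h(ν) exp ((v - ν u)/(1 - ν)) ≤ exp v + h(ν) exp ((u - ν v)/(1 - ν))` for
`0 ≤ v - u ≤ -ln ν`. Writing `u, v = μ ∓ δ`, `c = (1 + ν)/(1 - ν)` and `ν = exp (-2τ)`, it becomes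
`h(ν) sinh (c δ) ≤ sinh δ` for `0 ≤ δ ≤ τ`, where `h(ν) = 2 exp (-c τ) sinh τ`. This follows
from the monotonicity of `sinh (c x) / sinh x` together with `2 exp (-c τ) sinh (c τ) ≤ 1`.
-/

namespace Real

lemma convexOn_sinh_Ici : ConvexOn ℝ (Set.Ici 0) sinh :=
  convexOn_of_hasDerivWithinAt2_nonneg (convex_Ici 0) continuous_sinh.continuousOn
    (fun x _ => (hasDerivAt_sinh x).hasDerivWithinAt)
    (fun x _ => (hasDerivAt_cosh x).hasDerivWithinAt)
    (fun x hx => (sinh_pos_iff.2 (by simpa using hx)).le)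

lemma mul_sinh_le_mul_sinh {a b : ℝ} (hb : 0 ≤ b) (hba : b ≤ a) :
    a * sinh b ≤ b * sinh a := by
  rcases hb.eq_or_lt with rfl | hb
  · simp
  rcases hba.eq_or_lt with rfl | hba
  · exact le_rfl
  simpa using convexOn_sinh_Ici.secant_mono_aux1 Set.self_mem_Ici (Set.mem_Ici.2 (hb.trans hba).le)
    hb hba

lemma mul_sinh_le_sinh_mul {c x : ℝ} (hc : 1 ≤ c) (hx : 0 ≤ x) :
    c * sinh x ≤ sinh (c * x) := by
  rcases hx.eq_or_lt with rfl | hx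
  · simp
  have h := mul_sinh_le_mul_sinh hx.le (le_mul_of_one_le_left hx.le hc)
  exact le_of_mul_le_mul_left (by linear_combination h) hx

lemma cosh_mul_sinh_mul_le {c x : ℝ} (hc : 1 ≤ c) (hx : 0 ≤ x) :
    cosh x * sinh (c * x) ≤ c * sinh x * cosh (c * x) := by
  rcases hx.eq_or_lt with rfl | hx
  · simp
  have h := mul_sinh_le_mul_sinh (a := (c + 1) * x) (b := (c - 1) * x) (by nlinarith)
    (by nlinarith)
  rw [add_mul, sub_mul, one_mul, sinh_add, sinh_sub] at h
  have h' : (c + 1) * (sinh (c * x) * cosh x - cosh (c * x) * sinh x)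
      ≤ (c - 1) * (sinh (c * x) * cosh x + cosh (c * x) * sinh x) :=
    le_of_mul_le_mul_left (by linear_combination h) hx
  linarith

lemma sinh_mul_sinh_mul_le {c δ τ : ℝ} (hc : 1 ≤ c) (hδ : 0 ≤ δ) (hδτ : δ ≤ τ) :
    sinh τ * sinh (c * δ) ≤ sinh δ * sinh (c * τ) := by
  obtain ⟨w, hw, rfl⟩ : ∃ w, 0 ≤ w ∧ τ = δ + w := ⟨τ - δ, by linarith, by ring⟩
  have hcosh : cosh w ≤ cosh (c * w) := by
    rw [cosh_le_cosh, abs_of_nonneg hw, abs_of_nonneg (by positivity)]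
    exact le_mul_of_one_le_left hw hc
  have hsinh := mul_sinh_le_sinh_mul hc hw
  have htanh := cosh_mul_sinh_mul_le hc hδ
  have sδ : 0 ≤ sinh δ := sinh_nonneg_iff.2 hδ
  have scδ : 0 ≤ sinh (c * δ) := sinh_nonneg_iff.2 (by positivity)
  have sw : 0 ≤ sinh w := sinh_nonneg_iff.2 hw
  -- expand both sides by the addition formulas and compare term by term
  rw [mul_add, sinh_add, sinh_add]
  nlinarith [mul_le_mul_of_nonneg_left hcosh (mul_nonneg sδ scδ),
    mul_le_mul_of_nonneg_left hsinh (mul_nonneg sδ (cosh_pos (c * δ)).le),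
    mul_le_mul_of_nonneg_right htanh sw]

end Real

lemma hfun_pos_s18 {ν : ℝ} (hν0 : 0 < ν) (hν1 : ν < 1) : 0 < hfun ν := by
  have hlog : log ν < 0 := log_neg hν0 hν1
  rw [hfun, sub_pos, exp_lt_exp]
  exact div_lt_div_of_pos_right (by nlinarith) (by linarith)

lemma hfun_mul_sinh_le_sinh {ν δ : ℝ} (hν0 : 0 < ν) (hν1 : ν < 1) (hδ : 0 ≤ δ)
    (hδν : δ ≤ -log ν / 2) : hfun ν * sinh ((1 + ν) / (1 - ν) * δ) ≤ sinh δ := by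
  set c := (1 + ν) / (1 - ν) with hc
  set τ := -log ν / 2 with hτ
  have h1ν : 0 < 1 - ν := by linarith
  have hc1 : 1 ≤ c := by rw [hc, le_div_iff₀ h1ν]; linarith
  have hτ0 : 0 < τ := by linarith [log_neg hν0 hν1]
  have hh : hfun ν = exp (-(c * τ)) * (exp τ - exp (-τ)) := by
    rw [hfun, mul_sub, ← exp_add, ← exp_add]
    congr 2 <;> (rw [hc, hτ]; field_simp; ring)
  have hhτ : hfun ν * sinh (c * τ) = sinh τ * (1 - exp (-(c * τ)) ^ 2) := by
    rw [hh, sinh_eq, sinh_eq, exp_neg (c * τ)]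
    field_simp
  have hhτ_le : hfun ν * sinh (c * τ) ≤ sinh τ := by
    rw [hhτ]
    exact mul_le_of_le_one_right (sinh_pos_iff.2 hτ0).le (by nlinarith [sq_nonneg (exp (-(c * τ)))])
  refine le_of_mul_le_mul_left ?_ (sinh_pos_iff.2 hτ0)
  calc sinh τ * (hfun ν * sinh (c * δ)) = hfun ν * (sinh τ * sinh (c * δ)) := by ring
    _ ≤ hfun ν * (sinh δ * sinh (c * τ)) :=
      mul_le_mul_of_nonneg_left (sinh_mul_sinh_mul_le hc1 hδ hδν) (hfun_pos_s18 hν0 hν1).le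
    _ = sinh δ * (hfun ν * sinh (c * τ)) := by ring
    _ ≤ sinh δ * sinh τ := mul_le_mul_of_nonneg_left hhτ_le (sinh_nonneg_iff.2 hδ)
    _ = sinh τ * sinh δ := by ring

lemma exp_add_hfun_mul_exp_le {ν u v : ℝ} (hν0 : 0 < ν) (hν1 : ν < 1) (huv : u ≤ v)
    (hvu : v - u ≤ -log ν) :
    exp u + hfun ν * exp ((v - ν * u) / (1 - ν))
      ≤ exp v + hfun ν * exp ((u - ν * v) / (1 - ν)) := by
  obtain ⟨μ, δ, rfl, rfl⟩ : ∃ μ δ, u = μ - δ ∧ v = μ + δ :=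
    ⟨(u + v) / 2, (v - u) / 2, by ring, by ring⟩
  have h1ν : 1 - ν ≠ 0 := by linarith
  have key := hfun_mul_sinh_le_sinh hν0 hν1 (δ := δ) (by linarith) (by linarith)
  rw [show (μ + δ - ν * (μ - δ)) / (1 - ν) = μ + (1 + ν) / (1 - ν) * δ by field_simp; ring,
    show (μ - δ - ν * (μ + δ)) / (1 - ν) = μ + -((1 + ν) / (1 - ν) * δ) by field_simp; ring,
    sub_eq_add_neg, exp_add, exp_add, exp_add, exp_add]
  rw [sinh_eq, sinh_eq] at key
  nlinarith [mul_le_mul_of_nonneg_left key (exp_pos μ).le]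

section SecondBest

variable (hcard : 2 ≤ Fintype.card ι) {m : ι → ℝ} {x₁ x₂ : ι}

lemma maxOther_eq_of_ne_argmax (hx₁ : ∀ x, m x ≤ m x₁) {a : ι} (ha : a ≠ x₁) :
    maxOther hcard m a = m x₁ :=
  le_antisymm (sup'_le _ _ fun x _ => hx₁ x) (le_sup' m (mem_erase.2 ⟨ha.symm, mem_univ _⟩))

lemma maxOther_argmax_eq (hne : x₂ ≠ x₁) (hx₂ : ∀ x, x ≠ x₁ → m x ≤ m x₂) :
    maxOther hcard m x₁ = m x₂ :=
  le_antisymm (sup'_le _ _ fun x hx => hx₂ x (mem_erase.1 hx).1)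
    (le_sup' m (mem_erase.2 ⟨hne, mem_univ _⟩))

lemma xi_of_ne_argmax {ν : ℝ} (hν0 : 0 ≤ ν) (hν1 : ν ≤ 1) (hx₁ : ∀ x, m x ≤ m x₁) {a : ι}
    (ha : a ≠ x₁) :
    xi ν hcard m a = exp (m x₁) + hfun ν * exp ((m a - ν * m x₁) / (1 - ν)) := by
  rw [xi, maxOther_eq_of_ne_argmax hcard hx₁ ha,
    if_neg (by linarith [hx₁ a, log_nonpos hν0 hν1])]

lemma xi_le_xi_secondBest {ν : ℝ} (hν0 : 0 < ν) (hν1 : ν < 1) (hx₁ : ∀ x, m x ≤ m x₁)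
    (hne : x₂ ≠ x₁) (hx₂ : ∀ x, x ≠ x₁ → m x ≤ m x₂) (a : ι) :
    xi ν hcard m a ≤ xi ν hcard m x₂ := by
  have hh := hfun_pos_s18 hν0 hν1
  rw [xi_of_ne_argmax hcard hν0.le hν1.le hx₁ hne]
  rcases eq_or_ne a x₁ with rfl | ha
  · rw [xi, maxOther_argmax_eq hcard hne hx₂]
    split_ifs with hfar
    · exact le_add_of_nonneg_right (mul_nonneg hh.le (exp_pos _).le)
    · exact exp_add_hfun_mul_exp_le hν0 hν1 (hx₁ x₂) (by linarith)
  · rw [xi_of_ne_argmax hcard hν0.le hν1.le hx₁ ha]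
    gcongr
    exact hx₂ a ha

end SecondBest

theorem bounds_maximized_at_secondBest_general
    (ν : ℝ) (hν : ν ∈ Set.Ioo (0:ℝ) 1)
    (hcard : 2 ≤ Fintype.card ι) (m : ι → ℝ)
    (x₁ x₂ : ι) (hx₁ : ∀ x, m x ≤ m x₁) (hne : x₂ ≠ x₁)
    (hx₂ : ∀ x, x ≠ x₁ → m x ≤ m x₂)
    (L k : ℕ)
    (qLB qUB : ι → ℝ)
    (hqLB : ∀ a, qLB a =
      (xi ν hcard m a
        + Real.exp (minPair ν hcard m / (1 - ν)) * hfun ν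
          * ∑ n ∈ Finset.Icc 1 (L - k - 1), gfun ν ^ n)
        / ∑ l, Real.exp (m l))
    (hqUB : ∀ a, qUB a =
      (1 + hfun ν) ^ (L - k - 1) * xi ν hcard m a / ∑ l, Real.exp (m l)) :
    ∀ a, qLB a ≤ qLB x₂ ∧ qUB a ≤ qUB x₂ := by
  intro a
  have hxi := xi_le_xi_secondBest hcard hν.1 hν.2 hx₁ hne hx₂ a
  have hpow : 0 ≤ (1 + hfun ν) ^ (L - k - 1) := pow_nonneg (by linarith [hfun_pos_s18 hν.1 hν.2]) _
  rw [hqLB, hqLB, hqUB, hqUB]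
  exact ⟨by gcongr, by gcongr⟩

/-- the second-best index `x₂` maximizes both the lower bound `q_k^{LB}` and
the upper bound `q_k^{UB}` of the Q-function (second-best maximizer claim of Theorem 1). -/
theorem bounds_maximized_at_secondBest
    (ν : ℝ) (hν : ν ∈ Set.Ioo (0:ℝ) 1)
    (hcard : 2 ≤ Fintype.card ι) (m : ι → ℝ)
    (x₁ x₂ : ι) (hx₁ : ∀ x, m x ≤ m x₁) (hne : x₂ ≠ x₁)
    (hx₂ : ∀ x, x ≠ x₁ → m x ≤ m x₂)
    (L k : ℕ) (hL : 1 ≤ L) (hk : k ≤ L - 1)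
    (qLB qUB : ι → ℝ)
    (hqLB : ∀ a, qLB a =
      (xi ν hcard m a
        + Real.exp (minPair ν hcard m / (1 - ν)) * hfun ν
          * ∑ n ∈ Finset.Icc 1 (L - k - 1), gfun ν ^ n)
        / ∑ l, Real.exp (m l))
    (hqUB : ∀ a, qUB a =
      (1 + hfun ν) ^ (L - k - 1) * xi ν hcard m a / ∑ l, Real.exp (m l)) :
    ∀ a, qLB a ≤ qLB x₂ ∧ qUB a ≤ qUB x₂ :=
  bounds_maximized_at_secondBest_general ν hν hcard m x₁ x₂ hx₁ hne hx₂ L k qLB qUB hqLB hqUB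

end
end
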